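/- arXiv:2401.13392 — 8 statements merged into one kernel-verified Lean document; each statement's English description precedes it below -/
import Mathlib

section
/- Let ≼ be a preorder on a topological space (X,τ) admitting a finite lower-semicontinuous Richter–Peleg multi-utility. Let (x_i)_{i∈I} be a net in X converging to a ∈ X with respect to τ, and suppose there are b ∈ X and i₀ ∈ I such that b is incomparable to x_i for all i ≥ i₀. Then ¬(b ≺ a). -/
/-- If a preorder admits a finite lower-semicontinuous
Richter–Peleg multi-utility, and a net `x : I → X` converges to `a`, while
`b` is incomparable to `x i` for all `i ≥ i₀`, then `¬ (b ≺ a)`. -/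
theorem not_strict_lt_of_net_incomparable
    {X : Type*} [TopologicalSpace X] (r : X → X → Prop)
    (hrefl : ∀ x, r x x) (htrans : ∀ x y z, r x y → r y z → r x z)
    (U : Set (X → ℝ)) (hfin : U.Finite)
    (hrep : ∀ x y, r x y ↔ ∀ u ∈ U, u x ≤ u y)
    (hRP : ∀ u ∈ U, ∀ x y, (r x y ∧ ¬ r y x) → u x < u y)
    (hlsc : ∀ u ∈ U, LowerSemicontinuous u)
    {I : Type*} [Preorder I] [Nonempty I]
    (hdir : ∀ i j : I, ∃ k, i ≤ k ∧ j ≤ k)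
    (x : I → X) (a : X)
    (hconv : Filter.Tendsto x Filter.atTop (nhds a))
    (b : X) (i₀ : I)
    (hinc : ∀ i, i₀ ≤ i → ¬ r b (x i) ∧ ¬ r (x i) b) :
    ¬ (r b a ∧ ¬ r a b) := by
  rintro ⟨hba, hnab⟩
  haveI : IsDirected I (· ≤ ·) := ⟨hdir⟩
  have hev : ∀ᶠ i in Filter.atTop, ∀ u ∈ U, u b < u (x i) := by
    rw [Filter.eventually_all_finite hfin]
    intro u hu
    exact hconv.eventually (hlsc u hu a (u b) (hRP u hu b a ⟨hba, hnab⟩))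
  obtain ⟨i, hi, hi0⟩ := (hev.and (Filter.eventually_ge_atTop i₀)).exists
  exact (hinc i hi0).1 ((hrep b (x i)).2 fun u hu => (hi u hu).le)
end

section
/- Let ≼ be a preorder on a topological space (X,τ). Assume there is a chain C ⊆ X (a subset totally preordered by ≼) and an element x ∈ X such that x is incomparable to every c ∈ C. If every linear extension of ≼ is τ-lower semicontinuous, then the subspace topology on C is finer than the Alexandrov topology of the restriction of ≼ to C: every ≼-down-set of C is closed in the subspace topology τ|_C. -/
/-- Szpilrajn for preorders: any preorder extends to a total preorder
preserving the strict part. -/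
theorem exists_total_preorder_extension {α : Type*} (p : α → α → Prop)
    (prefl : ∀ a, p a a) (ptrans : ∀ a b c, p a b → p b c → p a c) :
    ∃ q : α → α → Prop, (∀ a, q a a) ∧ (∀ a b c, q a b → q b c → q a c) ∧
      (∀ a b, q a b ∨ q b a) ∧ (∀ a b, p a b → q a b) ∧
      (∀ a b, p a b ∧ ¬ p b a → q a b ∧ ¬ q b a) := by
  let s : Setoid α := ⟨fun a b => p a b ∧ p b a,
    ⟨fun a => ⟨prefl a, prefl a⟩, fun h => ⟨h.2, h.1⟩,
      fun h h' => ⟨ptrans _ _ _ h.1 h'.1, ptrans _ _ _ h'.2 h.2⟩⟩⟩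
  let Q := Quotient s
  let P : Q → Q → Prop := fun a b =>
    Quotient.liftOn₂ a b p (by
      rintro a b a' b' ⟨hab1, hab2⟩ ⟨h1, h2⟩
      exact propext ⟨fun h => ptrans _ _ _ hab2 (ptrans _ _ _ h h1),
        fun h => ptrans _ _ _ hab1 (ptrans _ _ _ h h2)⟩)
  have hP : ∀ a b : α, P ⟦a⟧ ⟦b⟧ ↔ p a b := fun a b => Iff.rfl
  haveI : IsPartialOrder Q P := by
    refine { refl := ?_, trans := ?_, antisymm := ?_ }
    · intro a; induction a using Quotient.ind; exact prefl _
    · intro a b c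
      induction a using Quotient.ind; induction b using Quotient.ind
      induction c using Quotient.ind
      exact ptrans _ _ _
    · intro a b
      induction a using Quotient.ind; induction b using Quotient.ind
      intro h1 h2; exact Quotient.sound ⟨h1, h2⟩
  obtain ⟨L, hL, hPL⟩ := extend_partialOrder P
  haveI := hL
  refine ⟨fun a b => L ⟦a⟧ ⟦b⟧, fun a => refl_of L _,
    fun a b c => trans_of L, fun a b => total_of L _ _,
    fun a b h => hPL _ _ h, ?_⟩
  rintro a b ⟨h1, h2⟩
  refine ⟨hPL _ _ h1, fun hba => ?_⟩
  have : (⟦a⟧ : Q) = ⟦b⟧ := antisymm_of L (hPL _ _ h1) hba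
  exact h2 ((hP b a).1 (this ▸ (hP a a).2 (prefl a)))

/-- Let `r` be a preorder on a topological space, `C` a chain and
`x` an element incomparable to every member of `C`.  If every linear extension
of `r` is lower semicontinuous, then the subspace topology on `C` is finer
than the Alexandrov topology of the restriction of `r` to `C`: every down-set
of `C` is closed in the subspace topology. -/
theorem subspace_finer_than_alexandrov_on_chain
    {X : Type*} [TopologicalSpace X] (r : X → X → Prop)
    (hrefl : ∀ x, r x x) (htrans : ∀ x y z, r x y → r y z → r x z)
    (C : Set X) (hchain : ∀ c ∈ C, ∀ c' ∈ C, r c c' ∨ r c' c)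
    (x : X) (hx : ∀ c ∈ C, ¬ r x c ∧ ¬ r c x)
    (hlin : ∀ r' : X → X → Prop,
      (∀ z, r' z z) → (∀ a b c, r' a b → r' b c → r' a c) →
      (∀ a b, r' a b ∨ r' b a) →
      (∀ a b, r a b → r' a b) →
      (∀ a b, (r a b ∧ ¬ r b a) → (r' a b ∧ ¬ r' b a)) →
      ∀ a : X, IsClosed {t : X | r' t a}) :
    ∀ S : Set X, S ⊆ C → (∀ c ∈ S, ∀ c' ∈ C, r c' c → c' ∈ S) →
      IsClosed (Subtype.val ⁻¹' S : Set C) := by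
  intro S hSC hdown
  -- L : elements to be placed below x ; U : elements to be placed above x
  set L : Set X := {a | r a x ∨ ∃ s ∈ S, r a s} with hLdef
  set U : Set X := {b | r x b ∨ ∃ c ∈ C \ S, r c b} with hUdef
  have hLdc : ∀ a b, r a b → b ∈ L → a ∈ L := by
    rintro a b hab (h | ⟨s, hs, hbs⟩)
    · exact Or.inl (htrans _ _ _ hab h)
    · exact Or.inr ⟨s, hs, htrans _ _ _ hab hbs⟩
  have hUuc : ∀ a b, r a b → a ∈ U → b ∈ U := by
    rintro a b hab (h | ⟨c, hc, hca⟩)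
    · exact Or.inl (htrans _ _ _ h hab)
    · exact Or.inr ⟨c, hc, htrans _ _ _ hca hab⟩
  -- c ∈ C \ S is never in L
  have hCSnL : ∀ c ∈ C, c ∉ S → c ∉ L := by
    rintro c hc hcS (h | ⟨s, hs, hcs⟩)
    · exact (hx c hc).2 h
    · exact hcS (hdown s hs c hc hcs)
  -- S ⊆ L, C \ S ⊆ U
  have hSL : ∀ c ∈ S, c ∈ L := fun c hc => Or.inr ⟨c, hc, hrefl c⟩
  have hCSU : ∀ c ∈ C, c ∉ S → c ∈ U := fun c hc hcS => Or.inr ⟨c, ⟨hc, hcS⟩, hrefl c⟩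
  -- if b ∈ L, a ∈ U and r a b, then also r b a
  have hLU : ∀ a b, b ∈ L → a ∈ U → r a b → r b a := by
    rintro a b (hb | ⟨s, hs, hbs⟩) (ha | ⟨c, hc, hca⟩) hab
    · exact htrans _ _ _ hb ha
    · exact absurd (htrans _ _ _ hca (htrans _ _ _ hab hb)) (hx c hc.1).2
    · exact absurd (htrans _ _ _ ha (htrans _ _ _ hab hbs)) (hx s (hSC hs)).1
    · exact absurd (hdown s hs c hc.1 (htrans _ _ _ hca (htrans _ _ _ hab hbs))) hc.2
  -- the intermediate preorder
  set p : X → X → Prop := fun a b =>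
    r a b ∨ (a ∈ L ∧ b ∈ U) ∨ (a ∈ L ∧ b = x) ∨ (a = x ∧ b ∈ U) with hpdef
  have prefl : ∀ a, p a a := fun a => Or.inl (hrefl a)
  have ptrans : ∀ a b c, p a b → p b c → p a c := by
    rintro a b c (hab | ⟨haL, hbU⟩ | ⟨haL, rfl⟩ | ⟨rfl, hbU⟩)
      <;> rintro (hbc | ⟨hbL, hcU⟩ | ⟨hbL, rfl⟩ | ⟨hb, hcU⟩)
    · exact Or.inl (htrans _ _ _ hab hbc)
    · exact Or.inr (Or.inl ⟨hLdc _ _ hab hbL, hcU⟩)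
    · exact Or.inr (Or.inr (Or.inl ⟨hLdc _ _ hab hbL, rfl⟩))
    · subst hb; exact Or.inr (Or.inl ⟨Or.inl hab, hcU⟩)
    · exact Or.inr (Or.inl ⟨haL, hUuc _ _ hbc hbU⟩)
    · exact Or.inr (Or.inl ⟨haL, hcU⟩)
    · exact Or.inr (Or.inr (Or.inl ⟨haL, rfl⟩))
    · exact Or.inr (Or.inl ⟨haL, hcU⟩)
    · exact Or.inr (Or.inl ⟨haL, Or.inl hbc⟩)
    · exact Or.inr (Or.inl ⟨haL, hcU⟩)
    · exact Or.inr (Or.inr (Or.inl ⟨haL, rfl⟩))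
    · exact Or.inr (Or.inl ⟨haL, hcU⟩)
    · exact Or.inr (Or.inr (Or.inr ⟨rfl, hUuc _ _ hbc hbU⟩))
    · exact Or.inr (Or.inr (Or.inr ⟨rfl, hcU⟩))
    · exact Or.inl (hrefl _)
    · exact Or.inr (Or.inr (Or.inr ⟨rfl, hcU⟩))
  have hpr : ∀ a b, r a b → p a b := fun a b h => Or.inl h
  have hxnC : x ∉ C := fun h => (hx x h).1 (hrefl x)
  -- strict part preserved
  have pstrict : ∀ a b, r a b ∧ ¬ r b a → p a b ∧ ¬ p b a := by
    rintro a b ⟨hab, hnba⟩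
    refine ⟨Or.inl hab, ?_⟩
    rintro (h | ⟨hbL, haU⟩ | ⟨hbL, hax⟩ | ⟨hbx, haU⟩)
    · exact hnba h
    · exact hnba (hLU _ _ hbL haU hab)
    · subst hax
      rcases hbL with h | ⟨s, hs, hbs⟩
      · exact hnba h
      · exact (hx s (hSC hs)).1 (htrans _ _ _ hab hbs)
    · subst hbx
      rcases haU with h | ⟨c, hc, hca⟩
      · exact hnba h
      · exact (hx c hc.1).2 (htrans _ _ _ hca hab)
  obtain ⟨q, qrefl, qtrans, qtotal, hpq, hpq'⟩ :=
    exists_total_preorder_extension p prefl ptrans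
  have hclosed := hlin q qrefl qtrans qtotal (fun a b h => hpq _ _ (hpr _ _ h))
    (fun a b h => hpq' _ _ (pstrict _ _ h)) x
  have key : (Subtype.val ⁻¹' S : Set C) = Subtype.val ⁻¹' {t : X | q t x} := by
    ext ⟨c, hc⟩
    simp only [Set.mem_preimage, Set.mem_setOf_eq]
    constructor
    · intro hcS
      exact hpq _ _ (Or.inr (Or.inr (Or.inl ⟨hSL c hcS, rfl⟩)))
    · intro hq
      by_contra hcS
      have : p x c ∧ ¬ p c x := by
        refine ⟨Or.inr (Or.inr (Or.inr ⟨rfl, hCSU c hc hcS⟩)), ?_⟩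
        rintro (h | ⟨hcL, hxU⟩ | ⟨hcL, _⟩ | ⟨rfl, hxU⟩)
        · exact (hx c hc).2 h
        · exact hCSnL c hc hcS hcL
        · exact hCSnL c hc hcS hcL
        · exact hxnC hc
      exact (hpq' _ _ this).2 hq
  rw [key]
  exact hclosed.preimage continuous_subtype_val
end

section
/- Let X = ℝ × {1,2} (two disjoint copies ℝ₁, ℝ₂ of the real line) with the partial order (x,i) ≼ (y,j) ⟺ (i = j and x ≤ y) or (i ≠ j and x < 0 and 0 ≤ y), and endow X with the Upper topology of ≼. Then there exists no finite lower-semicontinuous Richter–Peleg multi-utility for ≼ with respect to this topology. -/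
/-! The Upper topology is so coarse that, along either copy of `ℝ`, `(t, i)` converges to every
point as `t → ∞`: a subbasic open set `X \ L(a)` contains every `(t, i)` with `t > max a.1 0`.
Hence a lower-semicontinuous `u` with `u (0, 0) < u (1, 0)`, as forced by order preservation,
satisfies `u (0, 0) < u (t, 1)` for all large `t`. With finitely many utilities one `t` works for
all of them, so the multi-utility would give `(0, 0) ≼ (t, 1)`, which fails because `0 ≮ 0`. -/

/-- Two copies of the real line: `ℝ × Fin 2`. -/
abbrev StmtEightX : Type := ℝ × Fin 2

/-- The partial order of Example `ceupper`: within a copy the usual order;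
across copies, `(x,i) ≼ (y,j)` iff `x < 0 ≤ y`. -/
def stmtEightRel (p q : StmtEightX) : Prop :=
  (p.2 = q.2 ∧ p.1 ≤ q.1) ∨ (p.2 ≠ q.2 ∧ p.1 < 0 ∧ 0 ≤ q.1)

/-- The Upper topology of the relation. -/
def stmtEightUpper : TopologicalSpace StmtEightX :=
  TopologicalSpace.generateFrom
    {S : Set StmtEightX | ∃ a : StmtEightX, S = {t : StmtEightX | stmtEightRel t a}ᶜ}

open Filter

lemma not_stmtEightRel_of_lt (a : StmtEightX) (i : Fin 2) {t : ℝ} (ha : a.1 < t) (h0 : 0 < t) :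
    ¬ stmtEightRel (t, i) a := by
  rintro (⟨-, hle⟩ | ⟨-, hlt, -⟩) <;> linarith

lemma not_stmtEightRel_zero_of_ne {i j : Fin 2} (hij : i ≠ j) (t : ℝ) :
    ¬ stmtEightRel (0, i) (t, j) := by
  rintro (⟨h, -⟩ | ⟨-, h, -⟩)
  · exact hij h
  · exact lt_irrefl 0 h

lemma stmtEightRel_strict_of_lt (i : Fin 2) {x y : ℝ} (hxy : x < y) :
    stmtEightRel (x, i) (y, i) ∧ ¬ stmtEightRel (y, i) (x, i) := by
  refine ⟨Or.inl ⟨rfl, hxy.le⟩, ?_⟩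
  rintro (⟨-, h⟩ | ⟨h, -⟩)
  · linarith
  · exact h rfl

lemma tendsto_atTop_nhds_stmtEightUpper (i : Fin 2) (p : StmtEightX) :
    Tendsto (fun t : ℝ => ((t, i) : StmtEightX)) atTop (@nhds _ stmtEightUpper p) := by
  unfold stmtEightUpper
  rw [TopologicalSpace.tendsto_nhds_generateFrom_iff]
  rintro _ ⟨a, rfl⟩ -
  filter_upwards [eventually_gt_atTop (max a.1 0)] with t ht
  exact not_stmtEightRel_of_lt a i ((le_max_left _ _).trans_lt ht)
    ((le_max_right _ _).trans_lt ht)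

lemma eventually_lt_of_lowerSemicontinuous_stmtEightUpper {u : StmtEightX → ℝ}
    (hu : @LowerSemicontinuous StmtEightX ℝ stmtEightUpper _ u) {p : StmtEightX} {c : ℝ}
    (hc : c < u p) (i : Fin 2) : ∀ᶠ t : ℝ in atTop, c < u (t, i) :=
  (tendsto_atTop_nhds_stmtEightUpper i p).eventually (hu p c hc)

/-- On two copies of `ℝ` with the order above, endowed with the
Upper topology, there is no finite lower-semicontinuous Richter–Peleg
multi-utility. -/
theorem no_finite_lsc_RP_multiutility_upper :
    ¬ ∃ U : Set (StmtEightX → ℝ), U.Finite ∧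
      (∀ p q : StmtEightX, stmtEightRel p q ↔ ∀ u ∈ U, u p ≤ u q) ∧
      (∀ u ∈ U, ∀ p q : StmtEightX,
        (stmtEightRel p q ∧ ¬ stmtEightRel q p) → u p < u q) ∧
      (∀ u ∈ U, @LowerSemicontinuous StmtEightX ℝ stmtEightUpper _ u) := by
  rintro ⟨U, hfin, hiff, hstrict, hlsc⟩
  have hlarge : ∀ u ∈ U, ∀ᶠ t : ℝ in atTop, u (0, 0) < u (t, 1) := fun u hu =>
    eventually_lt_of_lowerSemicontinuous_stmtEightUpper (hlsc u hu)
      (hstrict u hu _ _ (stmtEightRel_strict_of_lt 0 one_pos)) 1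
  obtain ⟨t, ht⟩ := (hfin.eventually_all.2 hlarge).exists
  exact not_stmtEightRel_zero_of_ne zero_ne_one t ((hiff _ _).2 fun u hu => (ht u hu).le)
end

section
/- Let X = {x ∈ ℝ : x < 0 or x = 1 or x ≥ 2} with the partial order x ≼ y ⟺ x ≤ y and (y = 1 → x = 1) (so 1 is incomparable to every negative element, and x ≼ y ⟺ x ≤ y whenever y ≠ 1), and endow X with the Scott topology of ≼. Then there exists no finite lower-semicontinuous Richter–Peleg multi-utility for ≼ with respect to this topology. Consequently, the condition that the topology of the space refines the Scott topology is not sufficient for the existence of a finite lower-semicontinuous Richter–Peleg multi-utility. -/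
/-- The set `X = (-∞,0) ∪ {1} ∪ [2,∞)`. -/
abbrev StmtNineX : Type := {x : ℝ // x < 0 ∨ x = 1 ∨ 2 ≤ x}

/-- The partial order of Example `cescott`: `x ≼ y ⟺ x ≤ y ∧ (y = 1 → x = 1)`,
so `1` is incomparable to the negative elements. -/
def stmtNineRel (p q : StmtNineX) : Prop := p.1 ≤ q.1 ∧ (q.1 = 1 → p.1 = 1)

/-- Scott-open sets of the preorder: up-sets meeting every nonempty directed
set whose least upper bound they contain. -/
def stmtNineScottOpen (S : Set StmtNineX) : Prop :=
  (∀ x ∈ S, ∀ y, stmtNineRel x y → y ∈ S) ∧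
    ∀ D : Set StmtNineX, D.Nonempty → DirectedOn stmtNineRel D →
      ∀ s, (∀ d ∈ D, stmtNineRel d s) →
        (∀ b, (∀ d ∈ D, stmtNineRel d b) → stmtNineRel s b) →
        s ∈ S → (D ∩ S).Nonempty

/-- Any Scott-open set containing `2` contains a negative element. -/
lemma stmtNine_key (V : Set StmtNineX) (hV : stmtNineScottOpen V)
    (h2 : (⟨2, Or.inr (Or.inr le_rfl)⟩ : StmtNineX) ∈ V) :
    ∃ x ∈ V, x.1 < 0 := by
  set D : Set StmtNineX := {x | x.1 < 0} with hD
  have hne : D.Nonempty := ⟨⟨-1, Or.inl (by norm_num)⟩, by norm_num [hD]⟩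
  have hdir : DirectedOn stmtNineRel D := by
    rintro x hx y hy
    simp only [hD, Set.mem_setOf_eq] at hx hy
    have hmax : max x.1 y.1 < 0 := max_lt hx hy
    refine ⟨⟨max x.1 y.1, Or.inl hmax⟩, hmax, ⟨le_max_left _ _, ?_⟩,
      ⟨le_max_right _ _, ?_⟩⟩ <;>
    · intro h; simp only at h; rw [h] at hmax; norm_num at hmax
  have hub : ∀ d ∈ D, stmtNineRel d (⟨2, Or.inr (Or.inr le_rfl)⟩ : StmtNineX) := by
    intro d hd
    exact ⟨le_of_lt (lt_of_lt_of_le hd (by norm_num)), by norm_num⟩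
  have hlub : ∀ b, (∀ d ∈ D, stmtNineRel d b) →
      stmtNineRel (⟨2, Or.inr (Or.inr le_rfl)⟩ : StmtNineX) b := by
    intro b hb
    have hb1 : b.1 ≠ 1 := by
      intro h
      have := (hb ⟨-1, Or.inl (by norm_num)⟩ (by norm_num [hD])).2 h
      norm_num at this
    have hb0 : 0 ≤ b.1 := by
      by_contra h
      push_neg at h
      have hmem : (⟨b.1 / 2, Or.inl (by linarith)⟩ : StmtNineX) ∈ D := by
        simp only [hD, Set.mem_setOf_eq]; linarith
      have := (hb _ hmem).1
      simp only at this
      linarith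
    have hb2 : 2 ≤ b.1 := by
      rcases b.2 with h | h | h
      · linarith
      · exact absurd h hb1
      · exact h
    exact ⟨hb2, fun h => absurd h hb1⟩
  obtain ⟨x, hxD, hxV⟩ := hV.2 D hne hdir _ hub hlub h2
  exact ⟨x, hxV, hxD⟩

/-- On `X = (-∞,0) ∪ {1} ∪ [2,∞)` with the order above, endowed
with its Scott topology, there is no finite lower-semicontinuous Richter–Peleg
multi-utility (lower semicontinuity being expressed via Scott-open
neighbourhoods).  Hence refining the Scott topology is not sufficient for the
existence of such a representation. -/
theorem no_finite_lsc_RP_multiutility_scott :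
    ¬ ∃ U : Set (StmtNineX → ℝ), U.Finite ∧
      (∀ p q : StmtNineX, stmtNineRel p q ↔ ∀ u ∈ U, u p ≤ u q) ∧
      (∀ u ∈ U, ∀ p q : StmtNineX,
        (stmtNineRel p q ∧ ¬ stmtNineRel q p) → u p < u q) ∧
      (∀ u ∈ U, ∀ x₀ : StmtNineX, ∀ ε : ℝ, 0 < ε →
        ∃ V : Set StmtNineX, stmtNineScottOpen V ∧ x₀ ∈ V ∧
          ∀ x ∈ V, u x₀ - ε < u x) := by
  classical
  rintro ⟨U, hfin, hrep, hmono, hlsc⟩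
  set one : StmtNineX := ⟨1, Or.inr (Or.inl rfl)⟩ with hone
  set two : StmtNineX := ⟨2, Or.inr (Or.inr le_rfl)⟩ with htwo
  -- 1 ≺ 2
  have h12 : ∀ u ∈ U, u one < u two := by
    intro u hu
    refine hmono u hu one two ⟨⟨by norm_num, fun h => by norm_num at h⟩, ?_⟩
    intro ⟨h, h'⟩
    norm_num at h'
  -- for each u ∈ U, there is a negative point where u exceeds u one
  have hx : ∀ u ∈ U, ∃ x : StmtNineX, x.1 < 0 ∧ u one < u x := by
    intro u hu
    obtain ⟨V, hV, h2V, hVlt⟩ := hlsc u hu two (u two - u one) (by linarith [h12 u hu])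
    obtain ⟨x, hxV, hxneg⟩ := stmtNine_key V hV h2V
    refine ⟨x, hxneg, ?_⟩
    have := hVlt x hxV
    linarith
  -- choice function with default
  have hxg : ∀ u : StmtNineX → ℝ, ∃ x : StmtNineX, x.1 < 0 ∧ (u ∈ U → u one < u x) := by
    intro u
    by_cases hu : u ∈ U
    · obtain ⟨x, h1, h2⟩ := hx u hu
      exact ⟨x, h1, fun _ => h2⟩
    · exact ⟨⟨-1, Or.inl (by norm_num)⟩, by norm_num, fun h => absurd h hu⟩
  choose g hgneg hglt using hxg
  -- finite set of the chosen negative reals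
  set T : Finset ℝ := insert (-1) (hfin.toFinset.image (fun u => (g u).1)) with hT
  have hTne : T.Nonempty := ⟨-1, Finset.mem_insert_self _ _⟩
  set m : ℝ := T.max' hTne with hm
  have hmneg : m < 0 := by
    have hmem : m ∈ T := T.max'_mem hTne
    rcases Finset.mem_insert.mp hmem with h | h
    · rw [h]; norm_num
    · obtain ⟨u, _, hu2⟩ := Finset.mem_image.mp h
      rw [← hu2]
      exact hgneg u
  set xs : StmtNineX := ⟨m, Or.inl hmneg⟩ with hxs
  -- every u ∈ U satisfies u one ≤ u xs
  have hall : ∀ u ∈ U, u one ≤ u xs := by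
    intro u hu
    have hmem : (g u).1 ∈ T := by
      rw [hT]
      exact Finset.mem_insert_of_mem (Finset.mem_image.mpr ⟨u, hfin.mem_toFinset.mpr hu, rfl⟩)
    have hle : (g u).1 ≤ m := Finset.le_max' T _ hmem
    have hgu : u (g u) ≤ u xs := by
      rcases eq_or_lt_of_le hle with h | h
      · have : g u = xs := Subtype.ext h
        rw [this]
      · refine le_of_lt (hmono u hu (g u) xs ⟨⟨hle, fun hh => absurd hh (by simp [hxs]; linarith)⟩, ?_⟩)
        intro ⟨hh, _⟩
        simp only [hxs] at hh
        exact absurd hh (not_le.mpr h)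
    exact le_trans (le_of_lt (hglt u hu)) hgu
  have : stmtNineRel one xs := (hrep one xs).mpr hall
  have h1 : (1 : ℝ) ≤ m := this.1
  linarith
end

section
/- Let X = [0,∞) × {1,2} (two disjoint copies of [0,∞)). Define the preorder ⊑ by (x,i) ⊑ (y,j) ⟺ i = j and x ≤ y, and the preorder ≼ by (x,i) ≼ (y,j) ⟺ (i = j and x ≤ y) or (i = 1, j = 2, x < 1 and y ≥ 1) or (i = 2, j = 1 and x < 1). Then ≼ refines ⊑ (x ⊑ y implies x ≼ y), the weak lower contour set L_≼((2,2)) = {t ∈ X : t ≼ (2,2)} is closed in the Upper topology of ≼, but L_≼((2,2)) is not closed in the Upper topology of ⊑. Hence the Upper topology of ⊑ is not finer than the Upper topology of ≼, so the Upper topology does not satisfy the refinement-monotonicity property enjoyed by the Alexandrov topology. -/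
/-- Two copies of `[0,∞)`. -/
abbrev StmtTenX : Type := {x : ℝ // 0 ≤ x} × Fin 2

/-- The preorder `⊑`: comparable only within each copy, with the usual order. -/
def stmtTenRel₁ (p q : StmtTenX) : Prop := p.2 = q.2 ∧ p.1.1 ≤ q.1.1

/-- The refining preorder `≼`. -/
def stmtTenRel₂ (p q : StmtTenX) : Prop :=
  (p.2 = q.2 ∧ p.1.1 ≤ q.1.1) ∨
    (p.2 = 0 ∧ q.2 = 1 ∧ p.1.1 < 1 ∧ 1 ≤ q.1.1) ∨
    (p.2 = 1 ∧ q.2 = 0 ∧ p.1.1 < 1)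

/-- The Upper topology of a relation `r` on `StmtTenX`. -/
def stmtTenUpper (r : StmtTenX → StmtTenX → Prop) : TopologicalSpace StmtTenX :=
  TopologicalSpace.generateFrom
    {S : Set StmtTenX | ∃ a : StmtTenX, S = {t : StmtTenX | r t a}ᶜ}

lemma stmtTen_key (U : Set StmtTenX)
    (hU : TopologicalSpace.GenerateOpen
      {S : Set StmtTenX | ∃ a : StmtTenX, S = {t : StmtTenX | stmtTenRel₁ t a}ᶜ} U)
    (h1 : ((⟨1, by norm_num⟩ : {x : ℝ // 0 ≤ x}), (0 : Fin 2)) ∈ U) :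
    ∃ δ : ℝ, 0 ≤ δ ∧ δ < 1 ∧ ∀ (x : ℝ) (h : 0 ≤ x), δ < x → x < 1 →
      ((⟨x, h⟩ : {x : ℝ // 0 ≤ x}), (0 : Fin 2)) ∈ U := by
  induction hU with
  | basic S hS =>
      obtain ⟨a, rfl⟩ := hS
      by_cases hj : a.2 = 0
      · have h1' : ¬ ((1:ℝ) ≤ a.1.1) := fun hle => h1 ⟨hj.symm, hle⟩
        refine ⟨a.1.1, a.1.2, not_le.mp h1', ?_⟩
        intro x hx hδ _ hmem
        exact absurd hmem.2 (not_le.mpr hδ)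
      · refine ⟨0, le_refl 0, by norm_num, ?_⟩
        intro x hx _ _ hmem
        exact hj hmem.1.symm
  | univ => exact ⟨0, le_refl 0, by norm_num, fun x hx _ _ => trivial⟩
  | inter S T _ _ ihS ihT =>
      obtain ⟨δ₁, h₁0, h₁1, h₁⟩ := ihS h1.1
      obtain ⟨δ₂, h₂0, h₂1, h₂⟩ := ihT h1.2
      exact ⟨max δ₁ δ₂, le_max_of_le_left h₁0, max_lt h₁1 h₂1,
        fun x hx hδ hx1 => ⟨h₁ x hx (lt_of_le_of_lt (le_max_left _ _) hδ) hx1,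
          h₂ x hx (lt_of_le_of_lt (le_max_right _ _) hδ) hx1⟩⟩
  | sUnion 𝒮 _ ih =>
      obtain ⟨S, hS, hmem⟩ := h1
      obtain ⟨δ, h0, hlt, h⟩ := ih S hS hmem
      exact ⟨δ, h0, hlt, fun x hx hδ hx1 => ⟨S, hS, h x hx hδ hx1⟩⟩

/-- `≼` refines `⊑`; the weak lower contour set `L_≼((2,2))` is
closed in the Upper topology of `≼` but not in the Upper topology of `⊑`;
hence the Upper topology of `⊑` is not finer than that of `≼`, i.e. the Upper
topology fails the refinement-monotonicity enjoyed by the Alexandrov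
topology. -/
theorem upper_topology_not_refinement_monotone :
    (∀ p q : StmtTenX, stmtTenRel₁ p q → stmtTenRel₂ p q) ∧
    @IsClosed StmtTenX (stmtTenUpper stmtTenRel₂)
      {t : StmtTenX | stmtTenRel₂ t (⟨2, by norm_num⟩, 1)} ∧
    ¬ @IsClosed StmtTenX (stmtTenUpper stmtTenRel₁)
      {t : StmtTenX | stmtTenRel₂ t (⟨2, by norm_num⟩, 1)} ∧
    ¬ (∀ S : Set StmtTenX,
        @IsOpen StmtTenX (stmtTenUpper stmtTenRel₂) S →
        @IsOpen StmtTenX (stmtTenUpper stmtTenRel₁) S) := by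
  have hopen2 : @IsOpen StmtTenX (stmtTenUpper stmtTenRel₂)
      {t : StmtTenX | stmtTenRel₂ t (⟨2, by norm_num⟩, 1)}ᶜ :=
    TopologicalSpace.GenerateOpen.basic _ ⟨(⟨2, by norm_num⟩, 1), rfl⟩
  have hnotopen1 : ¬ @IsOpen StmtTenX (stmtTenUpper stmtTenRel₁)
      {t : StmtTenX | stmtTenRel₂ t (⟨2, by norm_num⟩, 1)}ᶜ := by
    intro ho
    have h1 : ((⟨1, by norm_num⟩ : {x : ℝ // 0 ≤ x}), (0 : Fin 2)) ∈
        {t : StmtTenX | stmtTenRel₂ t (⟨2, by norm_num⟩, 1)}ᶜ := by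
      intro hmem
      rcases hmem with ⟨h, _⟩ | ⟨_, _, h, _⟩ | ⟨h, _⟩ <;> simp_all
    obtain ⟨δ, h0, hlt, h⟩ := stmtTen_key _ ho h1
    have hx0 : (0:ℝ) ≤ (δ + 1) / 2 := by linarith
    have := h ((δ + 1) / 2) hx0 (by linarith) (by linarith)
    exact this (Or.inr (Or.inl ⟨rfl, rfl, by dsimp; linarith, by norm_num⟩))
  refine ⟨fun p q h => Or.inl h, (@isOpen_compl_iff StmtTenX _ (stmtTenUpper stmtTenRel₂)).mp hopen2,
    fun hc => hnotopen1 (@IsClosed.isOpen_compl _ (stmtTenUpper stmtTenRel₁) _ hc),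
    fun h => hnotopen1 (h _ hopen2)⟩
end

section
/- Every preorder ≼ on a set X admits a multi-utility representation: there exists a family 𝒰 of isotonic functions u : X → ℝ such that for all x, y ∈ X, x ≼ y if and only if u(x) ≤ u(y) for every u ∈ 𝒰. -/
/-- Every preorder admits a multi-utility representation by a
family of isotonic real-valued functions. -/
theorem exists_multiutility_representation
    {X : Type*} (r : X → X → Prop)
    (hrefl : ∀ x, r x x) (htrans : ∀ x y z, r x y → r y z → r x z) :
    ∃ U : Set (X → ℝ),
      (∀ u ∈ U, ∀ x y, r x y → u x ≤ u y) ∧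
      (∀ x y, r x y ↔ ∀ u ∈ U, u x ≤ u y) := by
  classical
  refine ⟨Set.range (fun z x => if r z x then (1:ℝ) else 0), ?_, ?_⟩
  · rintro u ⟨z, rfl⟩ x y hxy
    by_cases h : r z x
    · simp [h, htrans z x y h hxy]
    · by_cases h' : r z y <;> simp [h, h']
  · intro x y
    constructor
    · rintro hxy u ⟨z, rfl⟩
      by_cases h : r z x
      · simp [h, htrans z x y h hxy]
      · by_cases h' : r z y <;> simp [h, h']
    · intro h
      have := h _ ⟨x, rfl⟩
      simp only [hrefl x, if_true] at this
      by_contra hc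
      simp [hc] at this
      linarith
end

section
/- A total preorder ≼ on a set X is representable by a real-valued utility function (there exists u : X → ℝ with x ≼ y ⟺ u(x) ≤ u(y) for all x, y ∈ X) if and only if ≼ is perfectly separable. -/
/-! Given a utility `u`, it suffices to find a countable `t ⊆ range u` meeting `[a, b]` for all
`a < b` in `range u`. A countable dense subset of `range u` meets every such `[a, b]` that has a
point of `range u` strictly inside; for the remaining pairs, `a` is isolated on the right in
`range u`, which happens for only countably many `a`.

Conversely, with positive summable weights `w` on a separating countable set `D`,
`u x = ∑_{d ≤ x} w d + ∑_{d < x} w d` is monotone, and a separating point `y ≤ d ≤ x` between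
`y < x` contributes to `u x` but not to `u y` in one of the two sums. -/

open Set Filter Topology

section SeparatingSubset

variable {α : Type*} [LinearOrder α] [TopologicalSpace α] [OrderTopology α]
  [SecondCountableTopology α]

theorem Set.exists_countable_subset_inter_Icc_nonempty (s : Set α) :
    ∃ t ⊆ s, t.Countable ∧ ∀ a ∈ s, ∀ b ∈ s, a < b → (t ∩ Icc a b).Nonempty := by
  obtain ⟨c, hcs, hc, hsc⟩ :=
    (TopologicalSpace.IsSeparable.of_separableSpace s).exists_countable_dense_subset
  refine ⟨c ∪ {x ∈ s | 𝓝[s ∩ Ioi x] x = ⊥}, union_subset hcs (sep_subset _ _),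
    hc.union countable_setOfPred_isolated_right_within, fun a ha b hb hab => ?_⟩
  rcases (s ∩ Ioo a b).eq_empty_or_nonempty with hgap | ⟨z, hzs, hz⟩
  · have hisolated : 𝓝[s ∩ Ioi a] a = ⊥ := by
      rw [← empty_mem_iff_bot]
      exact mem_nhdsWithin.2 ⟨Iio b, isOpen_Iio, hab,
        fun z ⟨hzb, hzs, hza⟩ => hgap.subset ⟨hzs, hza, hzb⟩⟩
    exact ⟨a, Or.inr ⟨ha, hisolated⟩, left_mem_Icc.2 hab.le⟩
  · obtain ⟨d, hd, hdc⟩ := mem_closure_iff.1 (hsc hzs) (Ioo a b) isOpen_Ioo hz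
    exact ⟨d, Or.inl hdc, Ioo_subset_Icc_self hd⟩

theorem exists_countable_forall_lt_exists_between {X : Type*} (u : X → α) :
    ∃ D : Set X, D.Countable ∧ ∀ x y, u x < u y → ∃ d ∈ D, u x ≤ u d ∧ u d ≤ u y := by
  obtain ⟨t, hts, ht, hsep⟩ := (range u).exists_countable_subset_inter_Icc_nonempty
  have : Countable t := ht.to_subtype
  refine ⟨range fun a : t => rangeSplitting u ⟨a, hts a.2⟩, countable_range _,
    fun x y hxy => ?_⟩
  obtain ⟨a, hat, hxa, hay⟩ := hsep (u x) ⟨x, rfl⟩ (u y) ⟨y, rfl⟩ hxy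
  have hua : u (rangeSplitting u ⟨a, hts hat⟩) = a := apply_rangeSplitting u _
  exact ⟨_, ⟨⟨a, hat⟩, rfl⟩, hxa.trans_eq hua.symm, hua.trans_le hay⟩

end SeparatingSubset

section WeightedIndicator

variable {ι : Type*} {w : ι → ℝ} {A B : Set ι}

theorem tsum_indicator_le_of_subset (hw : ∀ i, 0 < w i) (hs : Summable w) (h : A ⊆ B) :
    ∑' i, A.indicator w i ≤ ∑' i, B.indicator w i :=
  (hs.indicator A).tsum_le_tsum (indicator_le_indicator_of_subset h fun i => (hw i).le)
    (hs.indicator B)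

theorem tsum_indicator_lt_of_subset_of_mem_diff (hw : ∀ i, 0 < w i) (hs : Summable w)
    (h : A ⊆ B) {j : ι} (hj : j ∈ B \ A) :
    ∑' i, A.indicator w i < ∑' i, B.indicator w i := by
  refine (hs.indicator A).tsum_lt_tsum (i := j)
    (indicator_le_indicator_of_subset h fun i => (hw i).le) ?_ (hs.indicator B)
  rw [indicator_of_notMem hj.2, indicator_of_mem hj.1]
  exact hw j

end WeightedIndicator

section TotalPreorder

variable {X : Type*} [Preorder X] [Std.Total (· ≤ · : X → X → Prop)]

theorem exists_utility_of_forall_lt_exists_between {ι : Type*} (e : ι → X) {w : ι → ℝ}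
    (hw : ∀ i, 0 < w i) (hs : Summable w) (hsep : ∀ x y, x < y → ∃ i, x ≤ e i ∧ e i ≤ y) :
    ∃ u : X → ℝ, ∀ x y, x ≤ y ↔ u x ≤ u y := by
  let below (x : X) : Set ι := {i | e i ≤ x}
  let strictlyBelow (x : X) : Set ι := {i | e i < x}
  have below_mono {x y : X} (h : x ≤ y) : below x ⊆ below y := fun _ hi => le_trans hi h
  have strictlyBelow_mono {x y : X} (h : x ≤ y) : strictlyBelow x ⊆ strictlyBelow y :=
    fun _ hi => lt_of_lt_of_le hi h
  refine ⟨fun x => ∑' i, (below x).indicator w i + ∑' i, (strictlyBelow x).indicator w i,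
    fun x y => ⟨fun hxy => add_le_add (tsum_indicator_le_of_subset hw hs (below_mono hxy))
      (tsum_indicator_le_of_subset hw hs (strictlyBelow_mono hxy)), fun hu => ?_⟩⟩
  by_contra hxy
  have hyx : y < x := lt_of_le_not_ge ((total_of (· ≤ ·) x y).resolve_left hxy) hxy
  obtain ⟨i, hyi, hix⟩ := hsep y x hyx
  refine hu.not_gt ?_
  by_cases hiy : e i ≤ y
  · -- `e i` is equivalent to `y`, so it lies strictly below `x` but not strictly below `y`
    exact add_lt_add_of_le_of_lt (tsum_indicator_le_of_subset hw hs (below_mono hyx.le))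
      (tsum_indicator_lt_of_subset_of_mem_diff hw hs (strictlyBelow_mono hyx.le)
        ⟨lt_of_le_of_lt hiy hyx, hyi.not_gt⟩)
  · exact add_lt_add_of_lt_of_le
      (tsum_indicator_lt_of_subset_of_mem_diff hw hs (below_mono hyx.le) ⟨hix, hiy⟩)
      (tsum_indicator_le_of_subset hw hs (strictlyBelow_mono hyx.le))

theorem exists_utility_of_countable_separating {D : Set X} (hD : D.Countable)
    (hsep : ∀ x y, x < y → ∃ d ∈ D, x ≤ d ∧ d ≤ y) :
    ∃ u : X → ℝ, ∀ x y, x ≤ y ↔ u x ≤ u y := by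
  obtain ⟨w, hw, _, hc, -⟩ := hD.exists_pos_hasSum_le one_pos
  refine exists_utility_of_forall_lt_exists_between ((↑) : D → X) (fun d => hw d)
    hc.summable fun x y hxy => ?_
  obtain ⟨d, hd, hxd, hdy⟩ := hsep x y hxy
  exact ⟨⟨d, hd⟩, hxd, hdy⟩

end TotalPreorder

/-- A total preorder is representable by a real-valued utility
function iff it is perfectly separable. -/
theorem representable_iff_perfectly_separable
    {X : Type*} (r : X → X → Prop)
    (hrefl : ∀ x, r x x) (htrans : ∀ x y z, r x y → r y z → r x z)
    (htotal : ∀ x y, r x y ∨ r y x) :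
    (∃ u : X → ℝ, ∀ x y, r x y ↔ u x ≤ u y) ↔
      (∃ D : Set X, D.Countable ∧
        ∀ x y, (r x y ∧ ¬ r y x) → ∃ d ∈ D, r x d ∧ r d y) := by
  let _ : Preorder X := { le := r, le_refl := hrefl, le_trans := htrans }
  have _ : Std.Total (· ≤ · : X → X → Prop) := ⟨htotal⟩
  constructor
  · rintro ⟨u, hu⟩
    obtain ⟨D, hD, hsep⟩ := exists_countable_forall_lt_exists_between u
    refine ⟨D, hD, fun x y ⟨hxy, hyx⟩ => ?_⟩
    obtain ⟨d, hd, hxd, hdy⟩ :=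
      hsep x y (lt_of_le_not_ge ((hu x y).1 hxy) fun h => hyx ((hu y x).2 h))
    exact ⟨d, hd, (hu x d).2 hxd, (hu d y).2 hdy⟩
  · rintro ⟨D, hD, hsep⟩
    exact exists_utility_of_countable_separating hD hsep
end

section
/- A total preorder ≼ on a topological space (X,τ) is representable by a continuous utility function (a τ-continuous u : X → ℝ with x ≼ y ⟺ u(x) ≤ u(y) for all x, y ∈ X) if and only if ≼ is perfectly separable and τ-continuous. -/
/-!
Identifying `x` and `y` when `x ≼ y ≼ x` turns the preorder into a linear order, and
`τ`-continuity says exactly that the quotient map is continuous for the order topology; so it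
suffices to build a continuous strictly monotone `f : L → ℝ` on a perfectly separable linear
order `L` with its order topology. Perfect separability makes the covering pairs `a ⋖ b`
countable, hence countably many pairs `a < b` suffice to get `x ≤ a < b ≤ y` for every `x < y`.
For such a pair, a Urysohn function `φ` for the disjoint closed sets `Iic a` and `Ici b` becomes
monotone, and stays continuous, after passing to `x ↦ sup φ (Iic x)`; a weighted sum of these
functions is `f`.

Conversely a continuous utility pulls back open rays, and every subset of `ℝ` is perfectly
separable: a countable dense subset serves pairs with a point in between, and the left ends of
gaps are countable.
-/

open Set Filter Topology Function

def PerfectlySeparable (α : Type*) [Preorder α] : Prop :=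
  ∃ D : Set α, D.Countable ∧ ∀ x y, x < y → ∃ d ∈ D, x ≤ d ∧ d ≤ y

theorem perfectlySeparable_iff_of_surjective {α β : Type*} [Preorder α] [Preorder β] {f : α → β}
    (hf : Surjective f) (hle : ∀ x y, x ≤ y ↔ f x ≤ f y) :
    PerfectlySeparable α ↔ PerfectlySeparable β := by
  have hlt : ∀ x y, x < y ↔ f x < f y := fun x y => by simp only [lt_iff_le_not_ge, hle]
  constructor
  · rintro ⟨D, hDc, hD⟩
    refine ⟨f '' D, hDc.image f, fun a b hab => ?_⟩
    obtain ⟨x, rfl⟩ := hf a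
    obtain ⟨y, rfl⟩ := hf b
    obtain ⟨d, hd, hxd, hdy⟩ := hD x y ((hlt x y).2 hab)
    exact ⟨f d, mem_image_of_mem f hd, (hle x d).1 hxd, (hle d y).1 hdy⟩
  · rintro ⟨C, hCc, hC⟩
    refine ⟨surjInv hf '' C, hCc.image _, fun x y hxy => ?_⟩
    obtain ⟨c, hc, hxc, hcy⟩ := hC (f x) (f y) ((hlt x y).1 hxy)
    refine ⟨surjInv hf c, mem_image_of_mem _ hc, (hle _ _).2 ?_, (hle _ _).2 ?_⟩
    all_goals rwa [surjInv_eq hf]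

theorem monotone_sSup_image_Iic {α : Type*} [Preorder α] {φ : α → ℝ} (hb : BddAbove (range φ)) :
    Monotone fun x => sSup (φ '' Iic x) := fun _ _ hxy =>
  csSup_le_csSup (hb.mono (image_subset_range _ _)) (nonempty_Iic.image φ)
    (image_mono (Iic_subset_Iic.2 hxy))

theorem exists_continuous_strictMono_of_separating {α ι : Type*} [Preorder α] [TopologicalSpace α]
    [Countable ι] (g : ι → α → ℝ) (hg : ∀ i, Continuous (g i)) (hmono : ∀ i, Monotone (g i))
    (h01 : ∀ i x, g i x ∈ Icc (0 : ℝ) 1) (hsep : ∀ x y, x < y → ∃ i, g i x < g i y) :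
    ∃ f : α → ℝ, Continuous f ∧ StrictMono f := by
  obtain ⟨e, he⟩ := exists_injective_nat ι
  set w : ι → ℝ := fun i => (1 / 2) ^ e i
  have hw : Summable w := summable_geometric_two.comp_injective he
  have hterm : ∀ i x, ‖w i * g i x‖ ≤ w i := fun i x => by
    rw [norm_mul, Real.norm_of_nonneg (by positivity), Real.norm_of_nonneg (h01 i x).1]
    exact mul_le_of_le_one_right (by positivity) (h01 i x).2
  have hsum : ∀ x, Summable fun i => w i * g i x := fun x => hw.of_norm_bounded (hterm · x)
  refine ⟨fun x => ∑' i, w i * g i x,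
    continuous_tsum (fun i => continuous_const.mul (hg i)) hw hterm, fun x y hxy => ?_⟩
  obtain ⟨i, hi⟩ := hsep x y hxy
  exact (hsum x).tsum_lt_tsum (fun j => mul_le_mul_of_nonneg_left (hmono j hxy.le) (by positivity))
    (mul_lt_mul_of_pos_left hi (by positivity)) (hsum y)

section LinearOrder

variable {L : Type*} [LinearOrder L]

theorem PerfectlySeparable.countable_setOf_covBy (h : PerfectlySeparable L) :
    {p : L × L | p.1 ⋖ p.2}.Countable := by
  obtain ⟨D, hDc, hD⟩ := h
  have hsub : ∀ d, ({p : L × L | p.1 = d ∧ p.1 ⋖ p.2} ∪ {p | p.2 = d ∧ p.1 ⋖ p.2}).Countable := by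
    intro d
    refine Subsingleton.countable ?_ |>.union (Subsingleton.countable ?_)
    · rintro ⟨a, b⟩ ⟨rfl, hab⟩ ⟨a', b'⟩ ⟨rfl, hab'⟩
      exact Prod.ext rfl (hab.unique_right hab')
    · rintro ⟨a, b⟩ ⟨rfl, hab⟩ ⟨a', b'⟩ ⟨rfl, hab'⟩
      exact Prod.ext (hab.unique_left hab') rfl
  refine (hDc.biUnion fun d _ => hsub d).mono ?_
  rintro ⟨a, b⟩ (hab : a ⋖ b)
  obtain ⟨d, hd, had, hdb⟩ := hD a b hab.lt
  refine mem_biUnion hd ?_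
  rcases had.eq_or_lt with rfl | had
  · exact Or.inl ⟨rfl, hab⟩
  · exact Or.inr ⟨(hdb.eq_of_not_lt (hab.2 had)).symm, hab⟩

theorem PerfectlySeparable.exists_countable_separating_pairs (h : PerfectlySeparable L) :
    ∃ T : Set (L × L), T.Countable ∧ (∀ p ∈ T, p.1 < p.2) ∧
      ∀ x y, x < y → ∃ p ∈ T, x ≤ p.1 ∧ p.2 ≤ y := by
  have hcov := h.countable_setOf_covBy
  obtain ⟨D, hDc, hD⟩ := h
  refine ⟨{p | p.1 < p.2 ∧ p ∈ D ×ˢ D} ∪ {p | p.1 ⋖ p.2},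
    ((hDc.prod hDc).mono fun p hp => hp.2).union hcov,
    fun p hp => hp.elim And.left CovBy.lt, fun x y hxy => ?_⟩
  by_cases hxy' : x ⋖ y
  · exact ⟨(x, y), Or.inr hxy', le_rfl, le_rfl⟩
  obtain ⟨z, hxz, hzy⟩ := (not_covBy_iff hxy).1 hxy'
  obtain ⟨d, hdD, hxd, hdz⟩ := hD x z hxz
  rcases hdz.lt_or_eq with hdz | rfl
  · obtain ⟨e, heD, hze, hey⟩ := hD z y hzy
    exact ⟨(d, e), Or.inl ⟨hdz.trans_le hze, hdD, heD⟩, hxd, hey⟩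
  by_cases hxd' : x ⋖ d
  · exact ⟨(x, d), Or.inr hxd', le_rfl, hzy.le⟩
  obtain ⟨w, hxw, hwd⟩ := (not_covBy_iff hxz).1 hxd'
  obtain ⟨d', hd'D, hxd', hd'w⟩ := hD x w hxw
  exact ⟨(d', d), Or.inl ⟨hd'w.trans_lt hwd, hd'D, hdD⟩, hxd', hzy.le⟩

variable [TopologicalSpace L] [OrderTopology L]

theorem perfectlySeparable_subtype [SecondCountableTopology L] (S : Set L) :
    PerfectlySeparable S := by
  obtain ⟨C, hCS, hCc, hSC⟩ :=
    (TopologicalSpace.IsSeparable.of_separableSpace S).exists_countable_dense_subset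
  refine ⟨(↑) ⁻¹' (C ∪ {x ∈ S | ∃ z, id x < z ∧ ∀ y ∈ S, x < y → z ≤ id y}),
    (hCc.union (countable_image_lt_image_Ioi_within S id)).preimage Subtype.coe_injective, ?_⟩
  rintro ⟨x, hx⟩ ⟨y, hy⟩ (hxy : x < y)
  by_cases hgap : ∃ v ∈ S, x < v ∧ v < y
  · obtain ⟨v, hvS, hxv, hvy⟩ := hgap
    obtain ⟨c, hc, hcC⟩ := mem_closure_iff_nhds.1 (hSC hvS) _ (Ioo_mem_nhds hxv hvy)
    exact ⟨⟨c, hCS hcC⟩, Or.inl hcC, hc.1.le, hc.2.le⟩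
  · push Not at hgap
    exact ⟨⟨x, hx⟩, Or.inr ⟨hx, y, hxy, fun z hz hxz => hgap z hz hxz⟩, le_rfl, hxy.le⟩

theorem continuous_sSup_image_Iic {φ : L → ℝ} (hφ : Continuous φ) (hb : BddAbove (range φ)) :
    Continuous fun x => sSup (φ '' Iic x) := by
  have hle : ∀ {x z}, z ≤ x → φ z ≤ sSup (φ '' Iic x) := fun hzx =>
    le_csSup (hb.mono (image_subset_range _ _)) (mem_image_of_mem φ hzx)
  refine continuous_iff_continuousAt.2 fun x => tendsto_order.2 ⟨fun a ha => ?_, fun a ha => ?_⟩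
  · obtain ⟨_, ⟨z, hzx, rfl⟩, haz⟩ := exists_lt_of_lt_csSup (nonempty_Iic.image φ) ha
    rcases (mem_Iic.1 hzx).eq_or_lt with rfl | hzx
    · filter_upwards [hφ.continuousAt.eventually (lt_mem_nhds haz)] with y hy
      exact hy.trans_le (hle le_rfl)
    · filter_upwards [Ioi_mem_nhds hzx] with y hy
      exact haz.trans_le (hle hy.le)
  · obtain ⟨c, hxc, hca⟩ := exists_between ha
    by_cases hx : ∃ b, x < b
    · obtain ⟨b, hxb, hφc⟩ := exists_Ico_subset_of_mem_nhds
        (hφ.continuousAt.eventually (gt_mem_nhds ((hle le_rfl).trans_lt hxc))) hx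
      filter_upwards [Iio_mem_nhds hxb] with y hy
      refine lt_of_le_of_lt (csSup_le (nonempty_Iic.image φ) ?_) hca
      rintro _ ⟨z, hzy, rfl⟩
      rcases le_or_gt z x with hzx | hxz
      · exact (hle hzx).trans hxc.le
      · exact (hφc ⟨hxz.le, lt_of_le_of_lt hzy hy⟩).le
    · push Not at hx
      exact Eventually.of_forall fun y => (monotone_sSup_image_Iic hb (hx y)).trans_lt ha

theorem exists_monotone_continuous_zero_one {a b : L} (hab : a < b) :
    ∃ g : L → ℝ, Continuous g ∧ Monotone g ∧ (∀ x, g x ∈ Icc 0 1) ∧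
      EqOn g 0 (Iic a) ∧ EqOn g 1 (Ici b) := by
  obtain ⟨φ, hφa, hφb, hφ01⟩ := exists_continuous_zero_one_of_isClosed isClosed_Iic isClosed_Ici
    (Iic_disjoint_Ici.2 hab.not_ge)
  have hb : BddAbove (range φ) := ⟨1, by rintro _ ⟨x, rfl⟩; exact (hφ01 x).2⟩
  have hle : ∀ {x z}, z ≤ x → φ z ≤ sSup (φ '' Iic x) := fun hzx =>
    le_csSup (hb.mono (image_subset_range _ _)) (mem_image_of_mem φ hzx)
  have hle_one : ∀ x, sSup (φ '' Iic x) ≤ 1 := fun x =>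
    csSup_le (nonempty_Iic.image φ) (by rintro _ ⟨z, -, rfl⟩; exact (hφ01 z).2)
  refine ⟨fun x => sSup (φ '' Iic x), continuous_sSup_image_Iic φ.continuous hb,
    monotone_sSup_image_Iic hb, fun x => ⟨(hφ01 x).1.trans (hle le_rfl), hle_one x⟩,
    fun x hx => le_antisymm ?_ ((hφ01 x).1.trans (hle le_rfl)),
    fun x hx => le_antisymm (hle_one x) ?_⟩
  · refine csSup_le (nonempty_Iic.image φ) ?_
    rintro _ ⟨z, hzx, rfl⟩
    exact (hφa (le_trans hzx hx)).le
  · simpa [hφb (mem_Ici.2 le_rfl)] using hle hx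

theorem PerfectlySeparable.exists_continuous_strictMono (h : PerfectlySeparable L) :
    ∃ f : L → ℝ, Continuous f ∧ StrictMono f := by
  obtain ⟨T, hTc, hT, hsep⟩ := h.exists_countable_separating_pairs
  have := hTc.to_subtype
  choose g hgc hgm hg01 hg0 hg1 using fun p : T => exists_monotone_continuous_zero_one (hT p p.2)
  refine exists_continuous_strictMono_of_separating g hgc hgm hg01 fun x y hxy => ?_
  obtain ⟨p, hpT, hxp, hpy⟩ := hsep x y hxy
  refine ⟨⟨p, hpT⟩, ?_⟩
  rw [hg0 _ hxp, hg1 _ hpy]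
  exact zero_lt_one

end LinearOrder

section Preorder

variable {α : Type*} [Preorder α] [TopologicalSpace α]

theorem PerfectlySeparable.exists_continuous_utility [@Std.Total α (· ≤ ·)]
    (h : PerfectlySeparable α) (hO : ∀ a : α, IsOpen (Iio a) ∧ IsOpen (Ioi a)) :
    ∃ u : α → ℝ, Continuous u ∧ ∀ x y, x ≤ y ↔ u x ≤ u y := by
  classical
  let π := toAntisymmetrization (α := α) (· ≤ ·)
  let _ : TopologicalSpace (Antisymmetrization α (· ≤ ·)) := Preorder.topology _
  have : OrderTopology (Antisymmetrization α (· ≤ ·)) := ⟨rfl⟩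
  have hπ : Continuous π := by
    refine continuous_generateFrom_iff.2 ?_
    rintro _ ⟨a, rfl | rfl⟩ <;> induction a using Antisymmetrization.ind
    exacts [(hO _).2, (hO _).1]
  have hL : PerfectlySeparable (Antisymmetrization α (· ≤ ·)) :=
    (perfectlySeparable_iff_of_surjective (f := π) (Antisymmetrization.ind _ fun a => ⟨a, rfl⟩)
      fun _ _ => Iff.rfl).1 h
  obtain ⟨f, hf, hfmono⟩ := hL.exists_continuous_strictMono
  exact ⟨f ∘ π, hf.comp hπ, fun x y => (hfmono.le_iff_le (a := π x) (b := π y)).symm⟩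

theorem exists_continuous_utility_iff [@Std.Total α (· ≤ ·)] :
    (∃ u : α → ℝ, Continuous u ∧ ∀ x y, x ≤ y ↔ u x ≤ u y) ↔
      PerfectlySeparable α ∧ ∀ a : α, IsOpen (Iio a) ∧ IsOpen (Ioi a) := by
  refine ⟨fun ⟨u, hu, hle⟩ => ⟨?_, fun a => ?_⟩, fun ⟨h, hO⟩ => h.exists_continuous_utility hO⟩
  · exact (perfectlySeparable_iff_of_surjective (f := rangeFactorization u)
      rangeFactorization_surjective hle).2 (perfectlySeparable_subtype _)
  · have hlt : ∀ x y, x < y ↔ u x < u y := fun x y => by simp only [lt_iff_le_not_ge, hle]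
    have hIio : Iio a = u ⁻¹' Iio (u a) := ext fun x => hlt x a
    have hIoi : Ioi a = u ⁻¹' Ioi (u a) := ext fun x => hlt a x
    rw [hIio, hIoi]
    exact ⟨isOpen_Iio.preimage hu, isOpen_Ioi.preimage hu⟩

end Preorder

/-- A total preorder on a topological space is representable by
a continuous utility function iff it is perfectly separable and
`τ`-continuous (its strict lower and upper contour sets are open). -/
theorem continuous_representable_iff_perfectly_separable_and_continuous
    {X : Type*} [TopologicalSpace X] (r : X → X → Prop)
    (hrefl : ∀ x, r x x) (htrans : ∀ x y z, r x y → r y z → r x z)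
    (htotal : ∀ x y, r x y ∨ r y x) :
    (∃ u : X → ℝ, Continuous u ∧ ∀ x y, r x y ↔ u x ≤ u y) ↔
      ((∃ D : Set X, D.Countable ∧
          ∀ x y, (r x y ∧ ¬ r y x) → ∃ d ∈ D, r x d ∧ r d y) ∧
        (∀ a : X, IsOpen {t : X | r t a ∧ ¬ r a t} ∧
          IsOpen {t : X | r a t ∧ ¬ r t a})) := by
  -- The default `<` of this preorder is `fun x y => r x y ∧ ¬ r y x`.
  let _ : Preorder X := { le := r, le_refl := hrefl, le_trans := htrans }
  have : @Std.Total X (· ≤ ·) := ⟨htotal⟩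
  exact exists_continuous_utility_iff
end
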